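/- arXiv:2411.11559 — 4 statements merged into one kernel-verified Lean document; each statement's English description precedes it below -/
import Mathlib

section
/- Let S be an N×N matrix with S·1_N = 1_N and S·D = D̂ for a treatment vector D ∈ ℝ^N (i.e., the same affine smoother is used for outcome and treatment predictions). Let V̂ = D − D̂, R̂ ∈ ℝ^N, α ∈ ℝ^N with R̂'diag(α)V̂ ≠ 0, and ω' = (R̂'diag(α)V̂)⁻¹ R̂'diag(α)(I_N − S). Then ω'·1_N = 0, ω'·D = 1, and ω'·(1_N − D) = −1. -/
open Matrix BigOperators

/-- With an affine smoother applied to both outcome and treatment,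
instrumental/causal forest outcome weights are fully-normalized. -/
theorem if_weights_fully_normalized {N : ℕ}
    (S : Matrix (Fin N) (Fin N) ℝ)
    (hS1 : S.mulVec (fun _ => (1 : ℝ)) = fun _ => 1)
    (D Dhat : Fin N → ℝ) (hSD : S.mulVec D = Dhat)
    (V : Fin N → ℝ) (hV : V = D - Dhat)
    (R α : Fin N → ℝ)
    (hden : ∑ i, R i * (α i * V i) ≠ 0)
    (ω : Fin N → ℝ)
    (hω : ω = (∑ i, R i * (α i * V i))⁻¹ •
      Matrix.vecMul R (Matrix.diagonal α * (1 - S))) :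
    ∑ i, ω i = 0 ∧ ∑ i, ω i * D i = 1 ∧ ∑ i, ω i * (1 - D i) = -1 := by
  set c := (∑ i, R i * (α i * V i))⁻¹ with hc
  have key : ∀ x : Fin N → ℝ,
      ∑ i, ω i * x i = c * (R ⬝ᵥ (Matrix.diagonal α).mulVec (x - S.mulVec x)) := by
    intro x
    have : ∑ i, ω i * x i = ω ⬝ᵥ x := rfl
    rw [this, hω, smul_dotProduct, ← Matrix.dotProduct_mulVec,
      ← Matrix.mulVec_mulVec, Matrix.sub_mulVec, Matrix.one_mulVec, smul_eq_mul]
  have h1 : ∑ i, ω i = 0 := by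
    have := key (fun _ => 1)
    simp only [mul_one] at this
    rw [this, hS1]
    simp
  have h2 : ∑ i, ω i * D i = 1 := by
    rw [key D, hSD]
    have : (Matrix.diagonal α).mulVec (D - Dhat) = fun i => α i * V i := by
      funext i
      rw [Matrix.mulVec_diagonal, hV]
    rw [this]
    exact inv_mul_cancel₀ hden
  refine ⟨h1, h2, ?_⟩
  have : ∀ i, ω i * (1 - D i) = ω i - ω i * D i := by intro i; ring
  simp only [this, Finset.sum_sub_distrib, h1, h2]
  norm_num
end

section
/- Let D ∈ {0,1}^N, and let S₁, S₀ be N×N matrices satisfying S₁·1_N = S₀·1_N = 1_N, S₁·(1_N − D) = 0, and S₀·D = 0 (affine smoothers with no smoothing between treatment groups). For any λ₁, λ₀ ∈ ℝ^N with diag(λ₁)·D = λ₁ and diag(λ₀)·D = 0 (i.e., λ₁ supported on treated, λ₀ on untreated), the AIPW weights ω' = N⁻¹·1_N'·[S₁ − S₀ + diag(λ₁)(I_N − S₁) − diag(λ₀)(I_N − S₀)] satisfy ω'·D = 1 and ω'·(1_N − D) = −1. -/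
open Matrix BigOperators

/-- AIPW weights with affine group-specific smoothers and no smoothing
between treatment groups have treated weights summing to 1 and untreated to -1. -/
theorem aipw_weights_fully_normalized {N : ℕ} (hN : 0 < N)
    (D : Fin N → ℝ) (hD : ∀ i, D i = 0 ∨ D i = 1)
    (S1 S0 : Matrix (Fin N) (Fin N) ℝ)
    (h1 : S1.mulVec (fun _ => (1 : ℝ)) = fun _ => 1)
    (h0 : S0.mulVec (fun _ => (1 : ℝ)) = fun _ => 1)
    (h1D : S1.mulVec (fun i => 1 - D i) = 0)
    (h0D : S0.mulVec D = 0)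
    (l1 l0 : Fin N → ℝ)
    (hl1 : ∀ i, l1 i * D i = l1 i)
    (hl0 : ∀ i, l0 i * D i = 0)
    (ω : Fin N → ℝ)
    (hω : ω = (N : ℝ)⁻¹ • Matrix.vecMul (fun _ => (1 : ℝ))
      (S1 - S0 + Matrix.diagonal l1 * (1 - S1) - Matrix.diagonal l0 * (1 - S0))) :
    ∑ i, ω i * D i = 1 ∧ ∑ i, ω i * (1 - D i) = -1 := by
  set M := S1 - S0 + Matrix.diagonal l1 * (1 - S1) - Matrix.diagonal l0 * (1 - S0) with hM
  have hS1D : S1.mulVec D = fun _ => 1 := by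
    have hv : ((fun _ => (1:ℝ)) - fun i => 1 - D i) = D := by funext i; simp
    have h := Matrix.mulVec_sub S1 (fun _ => (1:ℝ)) (fun i => 1 - D i)
    rw [hv, h1, h1D] at h
    rw [h]; funext i; simp
  have hMD : M.mulVec D = fun _ => 1 := by
    funext i
    simp only [hM, Matrix.sub_mulVec, Matrix.add_mulVec, ← Matrix.mulVec_mulVec,
      Matrix.sub_mulVec, Matrix.one_mulVec, hS1D, h0D]
    simp only [Pi.sub_apply, Pi.add_apply, Matrix.mulVec_diagonal, Pi.zero_apply]
    have e1 := hl1 i; have e0 := hl0 i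
    nlinarith [hl1 i, hl0 i]
  have hM1 : M.mulVec (fun _ => 1) = fun _ => 0 := by
    funext i
    simp only [hM, Matrix.sub_mulVec, Matrix.add_mulVec, ← Matrix.mulVec_mulVec,
      Matrix.sub_mulVec, Matrix.one_mulVec, h1, h0]
    simp [Matrix.mulVec_diagonal]
  have key : ∀ v : Fin N → ℝ, ∑ i, ω i * v i = (N : ℝ)⁻¹ * ∑ i, M.mulVec v i := by
    intro v
    rw [hω]
    have : ∑ i, ((N : ℝ)⁻¹ • Matrix.vecMul (fun _ => (1 : ℝ)) M) i * v i
        = (N : ℝ)⁻¹ * (Matrix.vecMul (fun _ => (1 : ℝ)) M ⬝ᵥ v) := by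
      simp [dotProduct, Finset.mul_sum, mul_assoc]
    rw [this, ← Matrix.dotProduct_mulVec]
    simp [dotProduct]
  have hNne : (N : ℝ) ≠ 0 := Nat.cast_ne_zero.mpr hN.ne'
  constructor
  · rw [key D, hMD]
    simp [hNne]
  · have h2 : ∑ i, ω i * (1 - D i) = ∑ i, ω i * (1:ℝ) - ∑ i, ω i * D i := by
      rw [← Finset.sum_sub_distrib]; congr 1; funext i; ring
    rw [h2, key D, key (fun _ => 1), hMD, hM1]
    simp [hNne]
end

section
/- In the setting of Wald-AIPW, suppose additionally S₁^z·D = D̂₁^z and S₀^z·D = D̂₀^z (the outcome smoother matrices are applied to form the treatment predictions). Then T·D = D̃, and hence the weights ω' = (1_N'D̃)⁻¹·1_N'·T satisfy ω'·D = 1; combined with the affine smoother condition S₁^z 1_N = S₀^z 1_N = 1_N, the weights are fully-normalized: ω'1_N = 0, ω'D = 1, ω'(1_N − D) = −1. -/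
open Matrix BigOperators

lemma sum_vecMul_one_mul {N : ℕ} (T : Matrix (Fin N) (Fin N) ℝ) (v : Fin N → ℝ) :
    ∑ j, (Matrix.vecMul (fun _ => (1 : ℝ)) T) j * v j = ∑ i, T.mulVec v i := by
  simp only [Matrix.vecMul, Matrix.mulVec, dotProduct, one_mul]
  rw [Finset.sum_comm]
  simp [Finset.sum_mul]

/-- If the outcome smoothers are also applied to form the treatment
predictions (C5b), then T·D = D̃ and, with affine smoothers, Wald-AIPW weights are
fully-normalized. -/
theorem wald_aipw_fully_normalized {N : ℕ}
    (S1 S0 : Matrix (Fin N) (Fin N) ℝ)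
    (h1 : S1.mulVec (fun _ => (1 : ℝ)) = fun _ => 1)
    (h0 : S0.mulVec (fun _ => (1 : ℝ)) = fun _ => 1)
    (l1 l0 D Dh1 Dh0 : Fin N → ℝ)
    (hS1D : S1.mulVec D = Dh1)
    (hS0D : S0.mulVec D = Dh0)
    (T : Matrix (Fin N) (Fin N) ℝ)
    (hT : T = S1 - S0 + Matrix.diagonal l1 * (1 - S1) - Matrix.diagonal l0 * (1 - S0))
    (Dt : Fin N → ℝ)
    (hDt : Dt = fun i => Dh1 i - Dh0 i + l1 i * (D i - Dh1 i) - l0 i * (D i - Dh0 i))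
    (hden : ∑ i, Dt i ≠ 0)
    (ω : Fin N → ℝ)
    (hω : ω = (∑ i, Dt i)⁻¹ • Matrix.vecMul (fun _ => (1 : ℝ)) T) :
    T.mulVec D = Dt ∧ ∑ i, ω i = 0 ∧ ∑ i, ω i * D i = 1 ∧
      ∑ i, ω i * (1 - D i) = -1 := by
  have hTD : T.mulVec D = Dt := by
    subst hT hDt
    funext i
    simp [Matrix.add_mulVec, Matrix.sub_mulVec, ← Matrix.mulVec_mulVec,
      hS1D, hS0D, Matrix.one_mulVec, Matrix.diagonal_mulVec_single,
      Matrix.mulVec_diagonal]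
  have hT1 : T.mulVec (fun _ => (1 : ℝ)) = 0 := by
    subst hT
    funext i
    simp [Matrix.add_mulVec, Matrix.sub_mulVec, ← Matrix.mulVec_mulVec,
      h1, h0, Matrix.one_mulVec]
  have hωv : ∀ v : Fin N → ℝ,
      ∑ j, ω j * v j = (∑ i, Dt i)⁻¹ * ∑ i, T.mulVec v i := by
    intro v
    subst hω
    simp only [Pi.smul_apply, smul_eq_mul, mul_assoc, ← Finset.mul_sum]
    rw [sum_vecMul_one_mul]
  have h2 : ∑ i, ω i = 0 := by
    have := hωv (fun _ => 1)
    simpa [hT1] using this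
  have h3 : ∑ i, ω i * D i = 1 := by
    rw [hωv, hTD, inv_mul_cancel₀ hden]
  refine ⟨hTD, h2, h3, ?_⟩
  have : ∑ i, ω i * (1 - D i) = ∑ i, ω i - ∑ i, ω i * D i := by
    rw [← Finset.sum_sub_distrib]; ring_nf
  rw [this, h2, h3]; norm_num
end

section
/- In the grf-AIPW setting, suppose additionally S·D = D̂ and S^τ·D = 1_N (the outcome smoother predicts the treatment, and each row of the CATE smoother applied to D gives 1). Then T·D = 1_N where T = S^τ + diag(λ₁ − λ₀)(I_N − S − diag(D − D̂)·S^τ), hence ω' = N⁻¹1_N'T satisfies ω'·D = 1; combined with S1_N = 1_N and S^τ1_N = 0, the weights are fully-normalized. -/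
open Matrix BigOperators

/-- grf-AIPW weights are fully-normalized when additionally the
outcome smoother predicts the treatment and the CATE smoother applied to D gives 1. -/
theorem grf_aipw_fully_normalized {N : ℕ} (hN : 0 < N)
    (S Sτ : Matrix (Fin N) (Fin N) ℝ)
    (hS : S.mulVec (fun _ => (1 : ℝ)) = fun _ => 1)
    (hSτ : Sτ.mulVec (fun _ => (1 : ℝ)) = 0)
    (D : Fin N → ℝ) (hD : ∀ i, D i = 0 ∨ D i = 1)
    (Dhat : Fin N → ℝ)
    (hSD : S.mulVec D = Dhat)
    (hSτD : Sτ.mulVec D = fun _ => 1)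
    (l1 l0 : Fin N → ℝ)
    (hl1 : ∀ i, l1 i * D i = l1 i)
    (hl0 : ∀ i, l0 i * D i = 0)
    (T : Matrix (Fin N) (Fin N) ℝ)
    (hT : T = Sτ + Matrix.diagonal (l1 - l0) *
      (1 - S - Matrix.diagonal (fun i => D i - Dhat i) * Sτ))
    (ω : Fin N → ℝ)
    (hω : ω = (N : ℝ)⁻¹ • Matrix.vecMul (fun _ => (1 : ℝ)) T) :
    T.mulVec D = (fun _ => 1) ∧ ∑ i, ω i = 0 ∧ ∑ i, ω i * D i = 1 ∧
      ∑ i, ω i * (1 - D i) = -1 := by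
  have hinner : (1 - S - Matrix.diagonal (fun i => D i - Dhat i) * Sτ).mulVec D = 0 := by
    rw [Matrix.sub_mulVec, Matrix.sub_mulVec, ← Matrix.mulVec_mulVec, hSτD, hSD,
      Matrix.one_mulVec]
    funext i
    simp [Matrix.mulVec_diagonal]
  have hTD : T.mulVec D = fun _ => 1 := by
    rw [hT, Matrix.add_mulVec, ← Matrix.mulVec_mulVec, hinner, hSτD]
    funext i; simp
  have hinner1 : (1 - S - Matrix.diagonal (fun i => D i - Dhat i) * Sτ).mulVec
      (fun _ => (1:ℝ)) = 0 := by
    rw [Matrix.sub_mulVec, Matrix.sub_mulVec, ← Matrix.mulVec_mulVec, hSτ, hS,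
      Matrix.one_mulVec]
    funext i
    simp [Matrix.mulVec_diagonal]
  have hT1 : T.mulVec (fun _ => (1:ℝ)) = 0 := by
    rw [hT, Matrix.add_mulVec, ← Matrix.mulVec_mulVec, hinner1, hSτ]
    funext i; simp
  have hωj : ∀ j, ω j = (N : ℝ)⁻¹ * ∑ i, T i j := by
    intro j; rw [hω]; simp [Matrix.vecMul, dotProduct]
  have hsum : ∑ i, ω i = 0 := by
    have : ∑ j, ∑ i, T i j = 0 := by
      rw [Finset.sum_comm]
      have := congrFun hT1
      simp only [Matrix.mulVec, dotProduct, mul_one] at this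
      simp [this]
    simp [hωj, ← Finset.mul_sum, this]
  have hsumD : ∑ i, ω i * D i = 1 := by
    have h1 : ∑ j, (∑ i, T i j) * D j = N := by
      have : ∀ i, ∑ j, T i j * D j = 1 := by
        intro i
        have := congrFun hTD i
        simpa [Matrix.mulVec, dotProduct] using this
      simp only [Finset.sum_mul]
      rw [Finset.sum_comm]
      simp [this]
    calc ∑ i, ω i * D i = ∑ j, (N:ℝ)⁻¹ * ((∑ i, T i j) * D j) := by
          simp [hωj, mul_assoc]
      _ = (N:ℝ)⁻¹ * ∑ j, (∑ i, T i j) * D j := by rw [Finset.mul_sum]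
      _ = 1 := by
          rw [h1]
          field_simp
  refine ⟨hTD, hsum, hsumD, ?_⟩
  have : ∑ i, ω i * (1 - D i) = ∑ i, ω i - ∑ i, ω i * D i := by
    rw [← Finset.sum_sub_distrib]; ring_nf
  rw [this, hsum, hsumD]; norm_num
end
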